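/- arXiv:2311.04810 — 2 statements merged into one kernel-verified Lean document; each statement's English description precedes it below -/
import Mathlib

section
/- Let (Ω, μ) be a finite measure space, let g : Ω → ℝ^{2×2} be measurable with g(x) symmetric positive definite and |g(x)^{-1}| ≤ C for μ-a.e. x (for some constant C ≥ 0). Let F and F_n (n ∈ ℕ) be matrix fields Ω → ℝ^{3×2} with ∫_Ω |F|⁴ dμ < ∞, ∫_Ω |F_n|⁴ dμ < ∞ for all n, and ∫_Ω |F_n − F|⁴ dμ → 0 as n → ∞. Then ∫_Ω |g^{-1/2} (FᵀF − g) g^{-1/2}|² dμ ≤ liminf_{n→∞} ∫_Ω |g^{-1/2} (F_nᵀF_n − g) g^{-1/2}|² dμ, and likewise ∫_Ω tr( g^{-1/2} (FᵀF − g) g^{-1/2} )² dμ ≤ liminf_{n→∞} ∫_Ω tr( g^{-1/2} (F_nᵀF_n − g) g^{-1/2} )² dμ. (This is the lower-semicontinuity of the stretching integrands, inequalities (4.7)–(4.8) in the proof of the lim-inf Theorem 4.2, with F_n = ∇ȳ_h and F = ∇ȳ.) -/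
open MeasureTheory Matrix Filter Topology Finset

/-- Frobenius norm of a real matrix. -/
noncomputable def frob {m n : Type*} [Fintype m] [Fintype n] (A : Matrix m n ℝ) : ℝ :=
  Real.sqrt (∑ i, ∑ j, (A i j) ^ 2)

/-!
Write `S = g^{-1/2}` and `M(H) = S (HᵀH - g) S`. Since `S g S = 1`, `M(H) = S HᵀH S - 1`, and
`|S|² = tr g⁻¹ ≤ √2 C`; hence `M(F)`, `M(Fₙ)` lie in L², and
`|M(Fₙ) - M(F)| ≤ √2 C |FₙᵀFₙ - FᵀF| ≤ √2 C (|Fₙ - F| + 2|F|) |Fₙ - F|`, which tends to 0 in L²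
by Hölder's inequality with exponents `(4, 4)`. So `M(Fₙ) → M(F)` and `tr M(Fₙ) → tr M(F)` in L²,
both integrals converge, and each lim inf is in fact a limit. The square root `g^{-1/2}` is not
assumed measurable, but it agrees a.e. with an explicit measurable function of `g`.
-/

attribute [local instance] Matrix.frobeniusNormedAddCommGroup

/-- Mathlib gives `Matrix` the product topology but no σ-algebra; we use the product σ-algebra,
which is the Borel one. -/
instance Matrix.instMeasurableSpace {m n α : Type*} [MeasurableSpace α] :
    MeasurableSpace (Matrix m n α) :=
  MeasurableSpace.pi

instance Matrix.instSecondCountableTopology {m n α : Type*} [Countable m] [Countable n]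
    [TopologicalSpace α] [SecondCountableTopology α] : SecondCountableTopology (Matrix m n α) :=
  inferInstanceAs (SecondCountableTopology (m → n → α))

instance Matrix.instBorelSpace {m n α : Type*} [Countable m] [Countable n] [TopologicalSpace α]
    [SecondCountableTopology α] [MeasurableSpace α] [BorelSpace α] : BorelSpace (Matrix m n α) :=
  Pi.borelSpace

instance : ENNReal.HolderTriple 4 4 2 :=
  ⟨by rw [← ENNReal.toReal_eq_toReal_iff' (by simp) (by simp)]; norm_num [ENNReal.toReal_add]⟩

section Frobenius

variable {l m n : Type*} [Fintype l] [Fintype m] [Fintype n]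

lemma frob_eq_norm (A : Matrix m n ℝ) : frob A = ‖A‖ := by
  rw [frob, frobenius_norm_def, Real.sqrt_eq_rpow]
  simp only [Real.norm_eq_abs, sq_abs, Real.rpow_two]

namespace Matrix

lemma norm_sq_eq_sum_sq (A : Matrix m n ℝ) : ‖A‖ ^ 2 = ∑ i, ∑ j, A i j ^ 2 := by
  rw [← frob_eq_norm, frob, Real.sq_sqrt (by positivity)]

lemma norm_sq_eq_trace_transpose_mul (A : Matrix m n ℝ) : ‖A‖ ^ 2 = trace (Aᵀ * A) := by
  rw [norm_sq_eq_sum_sq, Finset.sum_comm]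
  simp [trace, mul_apply, sq]

lemma abs_trace_le (A : Matrix n n ℝ) : |trace A| ≤ √(Fintype.card n) * ‖A‖ := by
  have h : trace A ^ 2 ≤ Fintype.card n * ‖A‖ ^ 2 := calc
    trace A ^ 2 ≤ Fintype.card n * ∑ i, A i i ^ 2 := sq_sum_le_card_mul_sum_sq
    _ ≤ Fintype.card n * ‖A‖ ^ 2 := by
      rw [norm_sq_eq_sum_sq]
      gcongr with i
      exact single_le_sum (f := fun j => A i j ^ 2) (fun _ _ => sq_nonneg _) (mem_univ i)
  rw [← Real.sqrt_sq (norm_nonneg A), ← Real.sqrt_mul (by positivity)]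
  exact Real.abs_le_sqrt h

lemma nnnorm_transpose_mul_le (A : Matrix l m ℝ) (B : Matrix l n ℝ) :
    ‖Aᵀ * B‖₊ ≤ ‖A‖₊ * ‖B‖₊ := by
  simpa [frobenius_nnnorm_transpose] using frobenius_nnnorm_mul Aᵀ B

lemma norm_mul_mul_le_of_sq_le {S : Matrix n n ℝ} {K : ℝ} (hS : ‖S‖ ^ 2 ≤ K)
    (X : Matrix n n ℝ) : ‖S * X * S‖ ≤ K * ‖X‖ := calc
  ‖S * X * S‖ ≤ ‖S‖ * ‖X‖ * ‖S‖ := by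
    grw [frobenius_norm_mul, frobenius_norm_mul]
  _ = ‖S‖ ^ 2 * ‖X‖ := by ring
  _ ≤ K * ‖X‖ := by gcongr

lemma norm_sq_le_of_mul_self_eq {S P : Matrix n n ℝ} (hS : S.IsHermitian) (h : S * S = P) :
    ‖S‖ ^ 2 ≤ √(Fintype.card n) * ‖P‖ := by
  have hST : Sᵀ = S := by rw [← conjTranspose_eq_transpose_of_trivial]; exact hS
  rw [norm_sq_eq_trace_transpose_mul, hST, h]
  exact (le_abs_self _).trans (abs_trace_le P)

lemma mul_mul_eq_one_of_mul_self_eq_inv [DecidableEq n] {S g : Matrix n n ℝ} (hS : IsUnit S)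
    (hg : IsUnit g) (h : S * S = g⁻¹) : S * g * S = 1 := by
  have hSSg : S * S * g = 1 := by rw [h, nonsing_inv_mul g ((isUnit_iff_isUnit_det g).1 hg)]
  refine hS.mul_left_cancel ?_
  rw [mul_one, ← Matrix.mul_assoc, ← Matrix.mul_assoc, hSSg, Matrix.one_mul]

lemma measurable_nonsing_inv [DecidableEq n] : Measurable fun A : Matrix n n ℝ => A⁻¹ := by
  simp only [inv_def, Ring.inverse_eq_inv']
  fun_prop

end Matrix

end Frobenius

/-- By Cayley–Hamilton, a positive definite `S` with `S * S = A` satisfies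
`A + det S = (tr S) S`, while `det S = √(det A)` and `(tr S)² = tr A + 2 det S`. -/
noncomputable def sqrtFinTwo (A : Matrix (Fin 2) (Fin 2) ℝ) : Matrix (Fin 2) (Fin 2) ℝ :=
  (√(trace A + 2 * √A.det))⁻¹ • (A + √A.det • 1)

lemma measurable_sqrtFinTwo : Measurable sqrtFinTwo := by
  unfold sqrtFinTwo
  fun_prop

lemma sqrtFinTwo_mul_self {S : Matrix (Fin 2) (Fin 2) ℝ} (hS : S.PosDef) :
    sqrtFinTwo (S * S) = S := by
  have htr : 0 < trace S := by
    rw [trace_fin_two]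
    linarith [hS.diag_pos (i := 0), hS.diag_pos (i := 1)]
  have hdet : √(S * S).det = S.det := by rw [det_mul, Real.sqrt_mul_self hS.det_pos.le]
  have hsum : trace (S * S) + 2 * S.det = trace S ^ 2 := by
    simp [trace_fin_two, mul_apply, Fin.sum_univ_two, det_fin_two]; ring
  have hCH : S * S + S.det • (1 : Matrix (Fin 2) (Fin 2) ℝ) = trace S • S := by
    ext i j
    fin_cases i <;> fin_cases j <;>
      simp [mul_apply, Fin.sum_univ_two, det_fin_two, trace_fin_two, one_apply] <;> ring
  rw [sqrtFinTwo, hdet, hsum, Real.sqrt_sq htr.le, hCH, smul_smul, inv_mul_cancel₀ htr.ne',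
    one_smul]

lemma Matrix.measurable_of_measurable_apply {Ω m n : Type*} [MeasurableSpace Ω]
    {F : Ω → Matrix m n ℝ} (h : ∀ i j, Measurable fun x => F x i j) : Measurable F :=
  measurable_pi_iff.2 fun i => measurable_pi_iff.2 (h i)

lemma aestronglyMeasurable_of_posDef_mul_self_eq {Ω : Type*} [MeasurableSpace Ω]
    {μ : Measure Ω} {S P : Ω → Matrix (Fin 2) (Fin 2) ℝ} (hP : Measurable P)
    (hS : ∀ᵐ x ∂μ, (S x).PosDef ∧ S x * S x = P x) : AEStronglyMeasurable S μ :=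
  (measurable_sqrtFinTwo.comp hP).aestronglyMeasurable.congr <| hS.mono fun x hx => by
    simp [← hx.2, sqrtFinTwo_mul_self hx.1]

lemma ENNReal.tendsto_zero_of_le_const_mul {α : Type*} {l : Filter α} {f g : α → ENNReal}
    {c : ENNReal} (hc : c ≠ ⊤) (hg : Tendsto g l (𝓝 0)) (hle : ∀ a, f a ≤ c * g a) :
    Tendsto f l (𝓝 0) := by
  have hlim := ENNReal.Tendsto.const_mul hg (.inr hc)
  rw [mul_zero] at hlim
  exact tendsto_of_tendsto_of_tendsto_of_le_of_le tendsto_const_nhds hlim (fun _ => zero_le) hle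

section Lp

variable {Ω E : Type*} [MeasurableSpace Ω] {μ : Measure Ω} [NormedAddCommGroup E]

lemma MeasureTheory.MemLp.norm_toLp_sq {f : Ω → E} (hf : MemLp f 2 μ) :
    ‖hf.toLp f‖ ^ 2 = ∫ x, ‖f x‖ ^ 2 ∂μ := by
  rw [Lp.norm_toLp, hf.eLpNorm_eq_integral_rpow_norm two_ne_zero ENNReal.ofNat_ne_top,
    ENNReal.toReal_ofReal (by positivity), ENNReal.toReal_ofNat, ← Real.rpow_natCast,
    ← Real.rpow_mul (integral_nonneg fun _ => by positivity)]
  norm_num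

lemma tendsto_integral_norm_sq {f : ℕ → Ω → E} {f₀ : Ω → E} (hf : ∀ n, MemLp (f n) 2 μ)
    (hf₀ : MemLp f₀ 2 μ) (h : Tendsto (fun n => eLpNorm (f n - f₀) 2 μ) atTop (𝓝 0)) :
    Tendsto (fun n => ∫ x, ‖f n x‖ ^ 2 ∂μ) atTop (𝓝 (∫ x, ‖f₀ x‖ ^ 2 ∂μ)) := by
  have := ((Lp.tendsto_Lp_iff_tendsto_eLpNorm'' f hf f₀ hf₀).2 h).norm.pow 2
  simpa only [MemLp.norm_toLp_sq] using this

lemma memLp_of_integrable_norm_pow {f : Ω → E} {p : ℕ} (hp : p ≠ 0)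
    (hf : AEStronglyMeasurable f μ) (h : Integrable (fun x => ‖f x‖ ^ p) μ) : MemLp f p μ :=
  (integrable_norm_rpow_iff hf (by exact_mod_cast hp) (ENNReal.natCast_ne_top p)).1
    (by simpa [Real.rpow_natCast] using h)

lemma tendsto_eLpNorm_of_tendsto_integral_norm_pow {f : ℕ → Ω → E} {p : ℕ} (hp : p ≠ 0)
    (hf : ∀ n, MemLp (f n) p μ) (h : Tendsto (fun n => ∫ x, ‖f n x‖ ^ p ∂μ) atTop (𝓝 0)) :
    Tendsto (fun n => eLpNorm (f n) p μ) atTop (𝓝 0) := by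
  have hp' : (p : ENNReal) ≠ 0 := by exact_mod_cast hp
  simp_rw [fun n => (hf n).eLpNorm_eq_integral_rpow_norm hp' (ENNReal.natCast_ne_top p),
    ENNReal.toReal_natCast, Real.rpow_natCast]
  have hroot :=
    ((Real.continuous_rpow_const (by positivity : (0 : ℝ) ≤ (p : ℝ)⁻¹)).tendsto 0).comp h
  rw [Real.zero_rpow (by positivity)] at hroot
  simpa [Function.comp_def] using (ENNReal.continuous_ofReal.tendsto 0).comp hroot

end Lp

section Gram

variable {Ω : Type*} [MeasurableSpace Ω] {μ : Measure Ω} {l m n : Type*}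
  [Fintype l] [Fintype m] [Fintype n]

lemma Matrix.norm_transpose_mul_self_sub_le (A B : Matrix l m ℝ) :
    ‖Aᵀ * A - Bᵀ * B‖ ≤ (‖A - B‖ + 2 * ‖B‖) * ‖A - B‖ := by
  have hsplit : Aᵀ * A - Bᵀ * B = Aᵀ * (A - B) + (A - B)ᵀ * B := by
    simp only [transpose_sub, Matrix.mul_sub, Matrix.sub_mul]
    abel
  have hA : ‖A‖ ≤ ‖A - B‖ + ‖B‖ := by simpa using norm_add_le (A - B) B
  have h₁ : ‖Aᵀ * (A - B)‖ ≤ ‖A‖ * ‖A - B‖ := by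
    exact_mod_cast nnnorm_transpose_mul_le A (A - B)
  have h₂ : ‖(A - B)ᵀ * B‖ ≤ ‖A - B‖ * ‖B‖ := by
    exact_mod_cast nnnorm_transpose_mul_le (A - B) B
  rw [hsplit]
  nlinarith [norm_add_le (Aᵀ * (A - B)) ((A - B)ᵀ * B), norm_nonneg (A - B)]

lemma MeasureTheory.MemLp.trace {F : Ω → Matrix n n ℝ} {p : ENNReal} (hF : MemLp F p μ) :
    MemLp (fun x => trace (F x)) p μ := by
  have := hF.1
  exact hF.of_le_mul (by fun_prop) (.of_forall fun x => abs_trace_le (F x))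

lemma MeasureTheory.MemLp.transpose_mul {H : Ω → Matrix l m ℝ} {K : Ω → Matrix l n ℝ}
    (hH : MemLp H 4 μ) (hK : MemLp K 4 μ) : MemLp (fun x => (H x)ᵀ * K x) 2 μ := by
  have := hH.1
  have := hK.1
  exact hH.of_bilin (fun A B => Aᵀ * B) 1 hK (by fun_prop)
    (.of_forall fun _ => by simpa using nnnorm_transpose_mul_le _ _)

lemma eLpNorm_gram_sub_le {H H₀ : Ω → Matrix l m ℝ} (hH : AEStronglyMeasurable H μ)
    (hH₀ : AEStronglyMeasurable H₀ μ) :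
    eLpNorm (fun x => (H x)ᵀ * H x - (H₀ x)ᵀ * H₀ x) 2 μ ≤
      (eLpNorm (H - H₀) 4 μ + 2 * eLpNorm H₀ 4 μ) * eLpNorm (H - H₀) 4 μ := by
  have hD := hH.sub hH₀
  calc eLpNorm (fun x => (H x)ᵀ * H x - (H₀ x)ᵀ * H₀ x) 2 μ
      ≤ eLpNorm (((fun x => ‖(H - H₀) x‖) + (2 : ℝ) • fun x => ‖H₀ x‖) •
          fun x => ‖(H - H₀) x‖) 2 μ :=
        eLpNorm_mono_real fun x => by simpa using norm_transpose_mul_self_sub_le (H x) (H₀ x)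
    _ ≤ eLpNorm ((fun x => ‖(H - H₀) x‖) + (2 : ℝ) • fun x => ‖H₀ x‖) 4 μ *
          eLpNorm (fun x => ‖(H - H₀) x‖) 4 μ :=
        eLpNorm_smul_le_mul_eLpNorm (by fun_prop) (by fun_prop)
    _ ≤ (eLpNorm (H - H₀) 4 μ + 2 * eLpNorm H₀ 4 μ) * eLpNorm (H - H₀) 4 μ := by
        grw [eLpNorm_add_le (by fun_prop) (by fun_prop) (by norm_num)]
        rw [eLpNorm_const_smul, eLpNorm_norm, eLpNorm_norm, enorm_eq_nnnorm,
          Real.nnnorm_ofNat, ENNReal.coe_ofNat]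

lemma tendsto_eLpNorm_gram_sub {H : ℕ → Ω → Matrix l m ℝ} {H₀ : Ω → Matrix l m ℝ}
    (hH : ∀ k, AEStronglyMeasurable (H k) μ) (hH₀ : MemLp H₀ 4 μ)
    (h : Tendsto (fun k => eLpNorm (H k - H₀) 4 μ) atTop (𝓝 0)) :
    Tendsto (fun k => eLpNorm (fun x => (H k x)ᵀ * H k x - (H₀ x)ᵀ * H₀ x) 2 μ) atTop
      (𝓝 0) := by
  have hc : 0 + 2 * eLpNorm H₀ 4 μ ≠ ⊤ := by
    simpa using ENNReal.mul_ne_top (by simp) hH₀.eLpNorm_ne_top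
  have hlim :=
    ENNReal.Tendsto.mul (h.add tendsto_const_nhds) (.inr ENNReal.zero_ne_top) h (.inr hc)
  rw [mul_zero] at hlim
  exact tendsto_of_tendsto_of_tendsto_of_le_of_le tendsto_const_nhds hlim (fun _ => zero_le)
    fun k => eLpNorm_gram_sub_le (hH k) hH₀.1

end Gram

section Stretch

variable {Ω : Type*} {m n : Type*} [Fintype m] [Fintype n] {S g : Ω → Matrix n n ℝ}

def stretch (S g : Ω → Matrix n n ℝ) (H : Ω → Matrix m n ℝ) (x : Ω) : Matrix n n ℝ :=
  S x * ((H x)ᵀ * H x - g x) * S x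

lemma stretch_sub_stretch (H H₀ : Ω → Matrix m n ℝ) (x : Ω) :
    stretch S g H x - stretch S g H₀ x = S x * ((H x)ᵀ * H x - (H₀ x)ᵀ * H₀ x) * S x := by
  simp only [stretch, Matrix.mul_sub, Matrix.sub_mul]
  abel

variable [MeasurableSpace Ω] {μ : Measure Ω} [DecidableEq n] {K : ℝ}

lemma memLp_stretch [IsFiniteMeasure μ] (hS : AEStronglyMeasurable S μ)
    (hSg : ∀ᵐ x ∂μ, ‖S x‖ ^ 2 ≤ K ∧ S x * g x * S x = 1) {H : Ω → Matrix m n ℝ}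
    (hH : MemLp H 4 μ) : MemLp (stretch S g H) 2 μ := by
  have := hH.1
  have hSHS : MemLp (fun x => S x * ((H x)ᵀ * H x) * S x) 2 μ :=
    (hH.transpose_mul hH).of_le_mul (by fun_prop)
      (hSg.mono fun x hx => norm_mul_mul_le_of_sq_le hx.1 _)
  refine (hSHS.sub (memLp_const 1)).ae_eq ?_
  filter_upwards [hSg] with x hx
  simp [stretch, Matrix.mul_sub, Matrix.sub_mul, hx.2]

lemma tendsto_eLpNorm_stretch_sub (hSg : ∀ᵐ x ∂μ, ‖S x‖ ^ 2 ≤ K ∧ S x * g x * S x = 1)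
    {H : ℕ → Ω → Matrix m n ℝ} {H₀ : Ω → Matrix m n ℝ}
    (hH : ∀ k, AEStronglyMeasurable (H k) μ) (hH₀ : MemLp H₀ 4 μ)
    (h : Tendsto (fun k => eLpNorm (H k - H₀) 4 μ) atTop (𝓝 0)) :
    Tendsto (fun k => eLpNorm (stretch S g (H k) - stretch S g H₀) 2 μ) atTop (𝓝 0) :=
  ENNReal.tendsto_zero_of_le_const_mul ENNReal.ofReal_ne_top
    (tendsto_eLpNorm_gram_sub hH hH₀ h)
    fun _ => eLpNorm_le_mul_eLpNorm_of_ae_le_mul (hSg.mono fun x hx => by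
      rw [Pi.sub_apply, stretch_sub_stretch]
      exact norm_mul_mul_le_of_sq_le hx.1 _) 2

theorem tendsto_integral_norm_sq_stretch [IsFiniteMeasure μ] (hS : AEStronglyMeasurable S μ)
    (hSg : ∀ᵐ x ∂μ, ‖S x‖ ^ 2 ≤ K ∧ S x * g x * S x = 1) {H : ℕ → Ω → Matrix m n ℝ}
    {H₀ : Ω → Matrix m n ℝ} (hH : ∀ k, MemLp (H k) 4 μ) (hH₀ : MemLp H₀ 4 μ)
    (h : Tendsto (fun k => eLpNorm (H k - H₀) 4 μ) atTop (𝓝 0)) :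
    Tendsto (fun k => ∫ x, ‖stretch S g (H k) x‖ ^ 2 ∂μ) atTop
      (𝓝 (∫ x, ‖stretch S g H₀ x‖ ^ 2 ∂μ)) :=
  tendsto_integral_norm_sq (fun k => memLp_stretch hS hSg (hH k)) (memLp_stretch hS hSg hH₀)
    (tendsto_eLpNorm_stretch_sub hSg (fun k => (hH k).1) hH₀ h)

theorem tendsto_integral_trace_sq_stretch [IsFiniteMeasure μ] (hS : AEStronglyMeasurable S μ)
    (hSg : ∀ᵐ x ∂μ, ‖S x‖ ^ 2 ≤ K ∧ S x * g x * S x = 1) {H : ℕ → Ω → Matrix m n ℝ}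
    {H₀ : Ω → Matrix m n ℝ} (hH : ∀ k, MemLp (H k) 4 μ) (hH₀ : MemLp H₀ 4 μ)
    (h : Tendsto (fun k => eLpNorm (H k - H₀) 4 μ) atTop (𝓝 0)) :
    Tendsto (fun k => ∫ x, trace (stretch S g (H k) x) ^ 2 ∂μ) atTop
      (𝓝 (∫ x, trace (stretch S g H₀ x) ^ 2 ∂μ)) := by
  have hconv : Tendsto (fun k => eLpNorm ((fun x => trace (stretch S g (H k) x)) -
      fun x => trace (stretch S g H₀ x)) 2 μ) atTop (𝓝 0) :=
    ENNReal.tendsto_zero_of_le_const_mul ENNReal.ofReal_ne_top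
      (tendsto_eLpNorm_stretch_sub hSg (fun k => (hH k).1) hH₀ h) fun k =>
      eLpNorm_le_mul_eLpNorm_of_ae_le_mul (.of_forall fun x => by
        simpa [← trace_sub] using abs_trace_le (stretch S g (H k) x - stretch S g H₀ x)) 2
  simpa only [Real.norm_eq_abs, sq_abs] using tendsto_integral_norm_sq
    (fun k => (memLp_stretch hS hSg (hH k)).trace) (memLp_stretch hS hSg hH₀).trace hconv

end Stretch

theorem stmt1_general
    {Ω : Type*} [MeasurableSpace Ω] (μ : Measure Ω) [IsFiniteMeasure μ]
    (g : Ω → Matrix (Fin 2) (Fin 2) ℝ)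
    (hgmeas : ∀ i j, Measurable fun x => g x i j)
    (C : ℝ)
    (hgpd : ∀ᵐ x ∂μ, (g x).PosDef ∧ frob ((g x)⁻¹) ≤ C)
    (ginvSqrt : Ω → Matrix (Fin 2) (Fin 2) ℝ)
    (hginvSqrt : ∀ᵐ x ∂μ, (ginvSqrt x).PosDef ∧ ginvSqrt x * ginvSqrt x = (g x)⁻¹)
    (F : Ω → Matrix (Fin 3) (Fin 2) ℝ)
    (Fn : ℕ → Ω → Matrix (Fin 3) (Fin 2) ℝ)
    (hFmeas : ∀ i j, Measurable fun x => F x i j)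
    (hFnmeas : ∀ n i j, Measurable fun x => Fn n x i j)
    (hF4 : Integrable (fun x => frob (F x) ^ 4) μ)
    (hFn4 : ∀ n, Integrable (fun x => frob (Fn n x) ^ 4) μ)
    (hconv : Tendsto (fun n => ∫ x, frob (Fn n x - F x) ^ 4 ∂μ) atTop (𝓝 0)) :
    (∫ x, frob (ginvSqrt x * ((F x)ᵀ * F x - g x) * ginvSqrt x) ^ 2 ∂μ ≤
        liminf (fun n =>
          ∫ x, frob (ginvSqrt x * ((Fn n x)ᵀ * Fn n x - g x) * ginvSqrt x) ^ 2 ∂μ) atTop) ∧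
    (∫ x, (trace (ginvSqrt x * ((F x)ᵀ * F x - g x) * ginvSqrt x)) ^ 2 ∂μ ≤
        liminf (fun n =>
          ∫ x, (trace (ginvSqrt x * ((Fn n x)ᵀ * Fn n x - g x) * ginvSqrt x)) ^ 2 ∂μ) atTop) := by
  simp only [frob_eq_norm] at hgpd hF4 hFn4 hconv ⊢
  have hF : MemLp F 4 μ := memLp_of_integrable_norm_pow four_ne_zero
    (measurable_of_measurable_apply hFmeas).aestronglyMeasurable hF4
  have hFn (n : ℕ) : MemLp (Fn n) 4 μ := memLp_of_integrable_norm_pow four_ne_zero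
    (measurable_of_measurable_apply (hFnmeas n)).aestronglyMeasurable (hFn4 n)
  have hS : AEStronglyMeasurable ginvSqrt μ := aestronglyMeasurable_of_posDef_mul_self_eq
    (measurable_nonsing_inv.comp (measurable_of_measurable_apply hgmeas)) hginvSqrt
  have hSg : ∀ᵐ x ∂μ, ‖ginvSqrt x‖ ^ 2 ≤ √2 * C ∧ ginvSqrt x * g x * ginvSqrt x = 1 := by
    filter_upwards [hgpd, hginvSqrt] with x ⟨hg, hgC⟩ ⟨hS, hSS⟩
    refine ⟨?_, mul_mul_eq_one_of_mul_self_eq_inv hS.isUnit hg.isUnit hSS⟩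
    calc ‖ginvSqrt x‖ ^ 2 ≤ √(Fintype.card (Fin 2)) * ‖(g x)⁻¹‖ :=
          norm_sq_le_of_mul_self_eq hS.isHermitian hSS
      _ ≤ √2 * C := by simp only [Fintype.card_fin, Nat.cast_ofNat]; gcongr
  have hlim := tendsto_eLpNorm_of_tendsto_integral_norm_pow four_ne_zero
    (fun n => (hFn n).sub hF) hconv
  exact ⟨(tendsto_integral_norm_sq_stretch hS hSg hFn hF hlim).liminf_eq.ge,
    (tendsto_integral_trace_sq_stretch hS hSg hFn hF hlim).liminf_eq.ge⟩

/-- lower semicontinuity of the stretching integrands under L⁴ convergence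
of the gradients (inequalities (4.7)–(4.8) of the lim-inf Theorem 4.2). Here
`ginvSqrt x` plays the role of `g(x)^{-1/2}`: it is (a.e.) the unique symmetric positive
definite matrix whose square is `g(x)⁻¹`. -/
theorem stmt1
    {Ω : Type*} [MeasurableSpace Ω] (μ : Measure Ω) [IsFiniteMeasure μ]
    (g : Ω → Matrix (Fin 2) (Fin 2) ℝ)
    (hgmeas : ∀ i j, Measurable fun x => g x i j)
    (C : ℝ) (hC : 0 ≤ C)
    (hgpd : ∀ᵐ x ∂μ, (g x).PosDef ∧ frob ((g x)⁻¹) ≤ C)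
    (ginvSqrt : Ω → Matrix (Fin 2) (Fin 2) ℝ)
    (hginvSqrt : ∀ᵐ x ∂μ, (ginvSqrt x).PosDef ∧ ginvSqrt x * ginvSqrt x = (g x)⁻¹)
    (F : Ω → Matrix (Fin 3) (Fin 2) ℝ)
    (Fn : ℕ → Ω → Matrix (Fin 3) (Fin 2) ℝ)
    (hFmeas : ∀ i j, Measurable fun x => F x i j)
    (hFnmeas : ∀ n i j, Measurable fun x => Fn n x i j)
    (hF4 : Integrable (fun x => frob (F x) ^ 4) μ)
    (hFn4 : ∀ n, Integrable (fun x => frob (Fn n x) ^ 4) μ)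
    (hconv : Tendsto (fun n => ∫ x, frob (Fn n x - F x) ^ 4 ∂μ) atTop (𝓝 0)) :
    (∫ x, frob (ginvSqrt x * ((F x)ᵀ * F x - g x) * ginvSqrt x) ^ 2 ∂μ ≤
        liminf (fun n =>
          ∫ x, frob (ginvSqrt x * ((Fn n x)ᵀ * Fn n x - g x) * ginvSqrt x) ^ 2 ∂μ) atTop) ∧
    (∫ x, (trace (ginvSqrt x * ((F x)ᵀ * F x - g x) * ginvSqrt x)) ^ 2 ∂μ ≤
        liminf (fun n =>
          ∫ x, (trace (ginvSqrt x * ((Fn n x)ᵀ * Fn n x - g x) * ginvSqrt x)) ^ 2 ∂μ) atTop) :=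
  stmt1_general μ g hgmeas C hgpd ginvSqrt hginvSqrt F Fn hFmeas hFnmeas hF4 hFn4 hconv
end

section
/- Let (Ω, μ) be a measure space and let F : Ω → ℝ^{3×2} be a measurable matrix field such that |F|² is integrable. Then (1/2) ( ∫_Ω |F|² dμ )² ≤ | ∫_Ω FᵀF dμ |², equivalently 2^{-1/2} ∫_Ω |F|² dμ ≤ | ∫_Ω FᵀF dμ |, where the integral of FᵀF is taken entrywise (Bochner integral). (This is the elementwise estimate (1/2)(∫_T |∇y_h|²)² ≤ |∫_T ∇y_hᵀ∇y_h|² established in the proof of Theorem 3.6 on partial coercivity.) -/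
open MeasureTheory Matrix Filter Topology Finset

lemma frob_sq {m n : Type*} [Fintype m] [Fintype n] (A : Matrix m n ℝ) :
    frob A ^ 2 = ∑ i, ∑ j, (A i j) ^ 2 := by
  unfold frob
  exact Real.sq_sqrt (Finset.sum_nonneg fun i _ => Finset.sum_nonneg fun j _ => sq_nonneg _)

/-- the elementwise estimate (1/2)(∫|F|²)² ≤ |∫ FᵀF|² (equivalently
2^{-1/2} ∫|F|² ≤ |∫ FᵀF|) from the proof of Theorem 3.6, the integral of FᵀF being
taken entrywise. -/
theorem stmt7
    {Ω : Type*} [MeasurableSpace Ω] (μ : Measure Ω)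
    (F : Ω → Matrix (Fin 3) (Fin 2) ℝ)
    (hFmeas : ∀ i j, Measurable fun x => F x i j)
    (hF2 : Integrable (fun x => frob (F x) ^ 2) μ) :
    (1 / 2) * (∫ x, frob (F x) ^ 2 ∂μ) ^ 2 ≤
        frob (Matrix.of fun i j => ∫ x, ((F x)ᵀ * F x) i j ∂μ) ^ 2 ∧
      (2 : ℝ) ^ (-(1 : ℝ) / 2) * ∫ x, frob (F x) ^ 2 ∂μ ≤
        frob (Matrix.of fun i j => ∫ x, ((F x)ᵀ * F x) i j ∂μ) := by
  -- integrability of each entry of FᵀF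
  have habmul : ∀ a b : ℝ, |a * b| ≤ (a ^ 2 + b ^ 2) / 2 := by
    intro a b
    rcases abs_cases (a * b) with ⟨h, _⟩ | ⟨h, _⟩ <;> nlinarith [sq_nonneg (a - b), sq_nonneg (a + b)]
  have hint : ∀ i j, Integrable (fun x => ((F x)ᵀ * F x) i j) μ := by
    intro i j
    refine hF2.mono ?_ ?_
    · refine (Finset.measurable_sum Finset.univ
        (fun k _ => (hFmeas k i).mul (hFmeas k j))).aestronglyMeasurable.congr ?_
      filter_upwards with x
      simp [Matrix.mul_apply, Matrix.transpose_apply]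
    · filter_upwards with x
      have hS : frob (F x) ^ 2 = ∑ k, ∑ l, (F x k l) ^ 2 := frob_sq _
      have hSn : (0:ℝ) ≤ ∑ k, ∑ l, (F x k l) ^ 2 :=
        Finset.sum_nonneg fun k _ => Finset.sum_nonneg fun l _ => sq_nonneg _
      have hi : ∑ k, (F x k i) ^ 2 ≤ ∑ k, ∑ l, (F x k l) ^ 2 :=
        Finset.sum_le_sum fun k _ =>
          Finset.single_le_sum (f := fun l => (F x k l) ^ 2) (fun l _ => sq_nonneg _)
            (Finset.mem_univ i)
      have hj : ∑ k, (F x k j) ^ 2 ≤ ∑ k, ∑ l, (F x k l) ^ 2 :=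
        Finset.sum_le_sum fun k _ =>
          Finset.single_le_sum (f := fun l => (F x k l) ^ 2) (fun l _ => sq_nonneg _)
            (Finset.mem_univ j)
      have h1 : |((F x)ᵀ * F x) i j| ≤ ∑ k, ∑ l, (F x k l) ^ 2 := by
        have : ((F x)ᵀ * F x) i j = ∑ k, F x k i * F x k j := by
          simp [Matrix.mul_apply, Matrix.transpose_apply]
        rw [this]
        calc |∑ k, F x k i * F x k j| ≤ ∑ k, |F x k i * F x k j| :=
              Finset.abs_sum_le_sum_abs _ _
          _ ≤ ∑ k, ((F x k i) ^ 2 + (F x k j) ^ 2) / 2 :=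
              Finset.sum_le_sum fun k _ => habmul _ _
          _ = ((∑ k, (F x k i) ^ 2) + ∑ k, (F x k j) ^ 2) / 2 := by
              rw [← Finset.sum_div, Finset.sum_add_distrib]
          _ ≤ ∑ k, ∑ l, (F x k l) ^ 2 := by linarith
      simp only [Real.norm_eq_abs, hS]
      rwa [abs_of_nonneg hSn]
  set M : Matrix (Fin 2) (Fin 2) ℝ := Matrix.of fun i j => ∫ x, ((F x)ᵀ * F x) i j ∂μ with hM
  -- trace identity
  have hT : ∫ x, frob (F x) ^ 2 ∂μ = M 0 0 + M 1 1 := by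
    have : M 0 0 + M 1 1 = ∫ x, (((F x)ᵀ * F x) 0 0 + ((F x)ᵀ * F x) 1 1) ∂μ := by
      rw [integral_add (hint 0 0) (hint 1 1)]
      rfl
    rw [this]
    refine integral_congr_ae (Filter.Eventually.of_forall fun x => ?_)
    show frob (F x) ^ 2 = _
    rw [frob_sq]
    simp [Matrix.mul_apply, Matrix.transpose_apply, Fin.sum_univ_two, Fin.sum_univ_three]
    ring
  have hMfrob : frob M ^ 2 = M 0 0 ^ 2 + M 0 1 ^ 2 + M 1 0 ^ 2 + M 1 1 ^ 2 := by
    rw [frob_sq]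
    simp [Fin.sum_univ_two]
    ring
  have h1 : (1 / 2) * (∫ x, frob (F x) ^ 2 ∂μ) ^ 2 ≤ frob M ^ 2 := by
    rw [hT, hMfrob]
    nlinarith [sq_nonneg (M 0 0 - M 1 1), sq_nonneg (M 0 1), sq_nonneg (M 1 0)]
  refine ⟨h1, ?_⟩
  have hTnn : 0 ≤ ∫ x, frob (F x) ^ 2 ∂μ :=
    integral_nonneg fun x => sq_nonneg _
  have hfnn : 0 ≤ frob M := Real.sqrt_nonneg _
  have hc : ((2:ℝ) ^ (-(1:ℝ) / 2)) ^ 2 = 1 / 2 := by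
    rw [← Real.rpow_natCast ((2:ℝ) ^ (-(1:ℝ)/2)) 2, ← Real.rpow_mul (by norm_num)]
    norm_num
  have hcnn : (0:ℝ) ≤ (2:ℝ) ^ (-(1:ℝ) / 2) := Real.rpow_nonneg (by norm_num) _
  nlinarith [mul_nonneg hcnn hTnn, sq_nonneg ((2:ℝ) ^ (-(1:ℝ)/2) * (∫ x, frob (F x) ^ 2 ∂μ) - frob M), mul_pow ((2:ℝ) ^ (-(1:ℝ)/2)) (∫ x, frob (F x) ^ 2 ∂μ) 2]
end
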